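/- arXiv:2311.02677 — 7 statements merged into one kernel-verified Lean document; each statement's English description precedes it below -/
import Mathlib

section
/- Let A be an n×n Hermitian matrix with eigenvalues λ_1,...,λ_n (counted with multiplicity) and an orthonormal basis of corresponding eigenvectors v_1,...,v_n. Let M_1 = A(2:n,2:n) be the submatrix obtained by deleting the first row and first column of A. Then for every i, |(v_i)_1|^2 · p_A'(λ_i) = p_{M_1}(λ_i), where p_A and p_{M_1} are the characteristic polynomials of A and M_1 respectively, and (v_i)_1 denotes the first component of v_i. -/
/-!
With `U` the unitary matrix whose columns are the `v i`, `A = U D Uᴴ` for `D = diagonal μ`, so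
`adj (X - A) = U adj (X - D) Uᴴ`, and `adj (X - D)` is diagonal with entries
`∏_{j ≠ k} (X - μ j)`. The `(0, 0)` entry of `adj (X - A)` is the characteristic polynomial of
the minor `A(2:n, 2:n)`; evaluating at `μ i` kills every term except `k = i`, which leaves
`|v i 0|² ∏_{j ≠ i} (μ i - μ j) = |v i 0|² p_A'(μ i)`.
-/

open Polynomial Matrix

namespace Polynomial

open Finset

variable {R : Type*} [CommRing R] {ι : Type*} [Fintype ι] [DecidableEq ι]

lemma eval_sum_mul_prod_erase_X_sub_C (c : ι → R) (μ : ι → R) (i : ι) :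
    (∑ k, C (c k) * ∏ j ∈ univ.erase k, (X - C (μ j))).eval (μ i) =
      c i * ∏ j ∈ univ.erase i, (μ i - μ j) := by
  rw [eval_finsetSum, sum_eq_single i]
  · simp [eval_prod]
  · intro k _ hki
    simp [eval_prod, prod_eq_zero (mem_erase.mpr ⟨Ne.symm hki, mem_univ i⟩)]
  · simp

lemma eval_derivative_prod_X_sub_C (μ : ι → R) (i : ι) :
    (derivative (∏ k, (X - C (μ k)))).eval (μ i) = ∏ j ∈ univ.erase i, (μ i - μ j) := by
  simpa [derivative_prod_finset] using eval_sum_mul_prod_erase_X_sub_C 1 μ i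

end Polynomial

namespace Matrix

open Finset

variable {R : Type*} [CommRing R] {n : Type*} [Fintype n] [DecidableEq n]

lemma adjugate_conj {U V : Matrix n n R} (hVU : V * U = 1) (M : Matrix n n R) :
    adjugate (U * M * V) = U * adjugate M * V := by
  have adjugate_eq {P Q : Matrix n n R} (hQP : Q * P = 1) : adjugate P = P.det • Q := by
    rw [← Matrix.one_mul (adjugate P), ← hQP, Matrix.mul_assoc, mul_adjugate, Matrix.mul_smul,
      Matrix.mul_one]
  have hUV : U * V = 1 := mul_eq_one_comm.mp hVU
  rw [adjugate_mul_distrib, adjugate_mul_distrib, adjugate_eq hVU, adjugate_eq hUV]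
  simp only [Matrix.smul_mul, Matrix.mul_smul, smul_smul, Matrix.mul_assoc, ← det_mul, hUV,
    det_one, one_smul]

lemma charmatrix_conj {U V : Matrix n n R} (hVU : V * U = 1) (M : Matrix n n R) :
    charmatrix (U * M * V) = U.map C * charmatrix M * V.map C := by
  have hUV : U.map C * V.map C = 1 := by
    rw [← Matrix.map_mul, mul_eq_one_comm.mp hVU, Matrix.map_one _ (map_zero C) (map_one C)]
  simp only [charmatrix, RingHom.mapMatrix_apply, Matrix.map_mul, Matrix.mul_sub, Matrix.sub_mul]
  rw [← (scalar_commute _ (Commute.all X) (U.map C)).eq, Matrix.mul_assoc (scalar n X), hUV,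
    Matrix.mul_one]

lemma charmatrix_submatrix {m : Type*} [Fintype m] [DecidableEq m] (M : Matrix n n R)
    {e : m → n} (he : Function.Injective e) :
    charmatrix (M.submatrix e e) = (charmatrix M).submatrix e e := by
  ext a b
  by_cases h : a = b
  · subst h; simp
  · simp [h, he.ne h]

lemma charpoly_submatrix_succ_eq_adjugate_charmatrix {k : ℕ}
    (M : Matrix (Fin (k + 1)) (Fin (k + 1)) R) :
    (M.submatrix Fin.succ Fin.succ).charpoly = adjugate (charmatrix M) 0 0 := by
  rw [adjugate_fin_succ_eq_det_submatrix, charpoly, charmatrix_submatrix M (Fin.succ_injective _)]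
  simp

lemma adjugate_charmatrix_conj_diagonal {U V : Matrix n n R} (hVU : V * U = 1) (μ : n → R) :
    adjugate (charmatrix (U * diagonal μ * V)) =
      U.map C * diagonal (fun k => ∏ j ∈ univ.erase k, (X - C (μ j))) * V.map C := by
  have hVU' : V.map C * U.map C = 1 := by
    rw [← Matrix.map_mul, hVU, Matrix.map_one _ (map_zero C) (map_one C)]
  rw [charmatrix_conj hVU, adjugate_conj hVU', charmatrix_diagonal, adjugate_diagonal]

lemma charpoly_conj_diagonal {U V : Matrix n n R} (hVU : V * U = 1) (μ : n → R) :
    charpoly (U * diagonal μ * V) = ∏ k, (X - C (μ k)) := by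
  rw [charpoly_mul_comm, ← Matrix.mul_assoc, hVU, Matrix.one_mul, charpoly_diagonal]

theorem eval_adjugate_charmatrix_apply_of_conj_diagonal {A U V : Matrix n n R} {μ : n → R}
    (hVU : V * U = 1) (hA : A = U * diagonal μ * V) (a b i : n) :
    (adjugate (charmatrix A) a b).eval (μ i) =
      U a i * V i b * (derivative A.charpoly).eval (μ i) := by
  subst hA
  rw [charpoly_conj_diagonal hVU, eval_derivative_prod_X_sub_C,
    ← eval_sum_mul_prod_erase_X_sub_C (fun k => U a k * V k b),
    adjugate_charmatrix_conj_diagonal hVU, mul_apply]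
  simp only [mul_diagonal, map_apply, map_mul]
  congr 1
  exact sum_congr rfl fun k _ => by ring

end Matrix

theorem stmt2_general (n : ℕ) (A : Matrix (Fin (n + 1)) (Fin (n + 1)) ℂ)
    (μ : Fin (n + 1) → ℂ) (v : Fin (n + 1) → Fin (n + 1) → ℂ)
    (heig : ∀ i, A.mulVec (v i) = μ i • v i)
    (horth : ∀ i j, star (v i) ⬝ᵥ v j = if i = j then 1 else 0) :
    ∀ i, (‖v i 0‖ ^ 2 : ℂ) * (derivative A.charpoly).eval (μ i) =
      ((A.submatrix Fin.succ Fin.succ).charpoly).eval (μ i) := by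
  intro i
  set U : Matrix (Fin (n + 1)) (Fin (n + 1)) ℂ := (of v)ᵀ
  have hUU : Uᴴ * U = 1 := by
    ext a b
    simpa [U, mul_apply, dotProduct, one_apply] using horth a b
  have hAU : A * U = U * diagonal μ := by
    ext j k
    simpa [U, mul_apply, mulVec, dotProduct, diagonal_apply, mul_comm] using congrFun (heig k) j
  have hA : A = U * diagonal μ * Uᴴ := by
    rw [← hAU, Matrix.mul_assoc, mul_eq_one_comm.mp hUU, Matrix.mul_one]
  rw [charpoly_submatrix_succ_eq_adjugate_charmatrix,
    eval_adjugate_charmatrix_apply_of_conj_diagonal hUU hA, ← Complex.mul_conj']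
  simp [U]

theorem stmt2 (n : ℕ) (A : Matrix (Fin (n + 1)) (Fin (n + 1)) ℂ)
    (hA : A.IsHermitian)
    (μ : Fin (n + 1) → ℂ) (v : Fin (n + 1) → Fin (n + 1) → ℂ)
    (heig : ∀ i, A.mulVec (v i) = μ i • v i)
    (horth : ∀ i j, star (v i) ⬝ᵥ v j = if i = j then 1 else 0) :
    ∀ i, (‖v i 0‖ ^ 2 : ℂ) * (derivative A.charpoly).eval (μ i) =
      ((A.submatrix Fin.succ Fin.succ).charpoly).eval (μ i) :=
  stmt2_general n A μ v heig horth
end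

section
/- Let p and q be real monic polynomials with deg p = m, deg q = m-1, m ≥ 2, such that p has m distinct real roots and the roots of q strictly interlace those of p. Write p = s·q - r with deg r ≤ m-2 (polynomial division with sign convention). Then r has degree exactly m-2, its leading coefficient is positive, and r/γ(r) is monic with m-2 distinct real roots strictly interlacing those of q. -/
/-!
Since `q (ν i) = 0`, the remainder satisfies `r (ν i) = -p (ν i)`, and interlacing leaves exactly
`m - 1 - i` roots of `p` above `ν i`; hence `r` alternates in sign along `ν 0 < ⋯ < ν (m - 2)`,
starting from `(-1) ^ m`. The intermediate value theorem gives a root of `r` strictly between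
consecutive `ν`'s. These `m - 2` distinct roots exhaust `deg r ≤ m - 2`, so `r` is its leading
coefficient times their product, and that coefficient is positive because `r (ν (m - 2)) > 0`.
-/

open Polynomial Finset Function Set

theorem Fin.card_filter_le_val (n k : ℕ) : #{j : Fin n | k ≤ (j : ℕ)} = n - k := by
  have h := card_filter_add_card_filter_not (s := (univ : Finset (Fin n))) (fun j => (j : ℕ) < k)
  simp only [not_lt, card_univ, Fintype.card_fin, Fin.card_filter_val_lt] at h
  omega

section Sign

variable {R : Type*} [CommRing R] [LinearOrder R] [IsStrictOrderedRing R]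

theorem mul_neg_of_neg_one_pow_mul_pos {a b : R} {j k : ℕ} (ha : 0 < (-1) ^ j * a)
    (hb : 0 < (-1) ^ k * b) (hjk : j = k + 1) : a * b < 0 := by
  subst hjk
  have hsq : ((-1 : R) ^ k) ^ 2 = 1 := by rw [← pow_mul, mul_comm, pow_mul, neg_one_sq, one_pow]
  have hprod : (-1) ^ (k + 1) * a * ((-1) ^ k * b) = -(a * b) := by
    rw [pow_succ]; linear_combination (-(a * b)) * hsq
  linarith [mul_pos ha hb]

theorem neg_one_pow_mul_eval_prod_X_sub_C_pos {n : ℕ} (μ : Fin n → R) {x : R} (k : ℕ)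
    (hlt : ∀ j : Fin n, (j : ℕ) < k → μ j < x) (hgt : ∀ j : Fin n, k ≤ (j : ℕ) → x < μ j) :
    0 < (-1) ^ (n - k) * (∏ j, (X - C (μ j))).eval x := by
  have hsign : (-1 : R) ^ (n - k) = ∏ j : Fin n, if k ≤ (j : ℕ) then -1 else 1 := by
    rw [prod_ite, prod_const_one, mul_one, prod_const, Fin.card_filter_le_val]
  rw [eval_prod, hsign, ← prod_mul_distrib]
  refine prod_pos fun j _ => ?_
  split_ifs with hj
  · simpa using hgt j hj
  · simpa using hlt j (not_le.1 hj)

theorem neg_one_pow_mul_eval_prod_X_sub_C_pos_of_mem_Ioo {m : ℕ} {μ : Fin m → R}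
    (hμ : Monotone μ) {x : R} {i : ℕ} (hi : i + 1 < m)
    (hx : x ∈ Ioo (μ ⟨i, by omega⟩) (μ ⟨i + 1, hi⟩)) :
    0 < (-1) ^ (m - (i + 1)) * (∏ j, (X - C (μ j))).eval x := by
  refine neg_one_pow_mul_eval_prod_X_sub_C_pos μ (i + 1) (fun j hj => ?_) (fun j hj => ?_)
  · exact (hμ (Fin.mk_le_mk.2 (by omega) : j ≤ ⟨i, by omega⟩)).trans_lt hx.1
  · exact hx.2.trans_le (hμ (Fin.mk_le_mk.2 hj : ⟨i + 1, hi⟩ ≤ j))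

theorem pos_of_eval_C_mul_prod_X_sub_C_pos {n : ℕ} {ρ : Fin n → R} {c x : R}
    (hρ : ∀ i, ρ i < x) (h : 0 < (C c * ∏ i, (X - C (ρ i))).eval x) : 0 < c := by
  rw [eval_mul, eval_C, eval_prod] at h
  exact (pos_iff_pos_of_mul_pos h).2 (prod_pos fun i _ => by simpa using hρ i)

end Sign

theorem exists_mem_Ioo_eq_zero_of_mul_neg {α : Type*} [ConditionallyCompleteLinearOrder α]
    [TopologicalSpace α] [OrderTopology α] [DenselyOrdered α] {f : α → ℝ} {a b : α} (hab : a ≤ b)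
    (hf : ContinuousOn f (Icc a b)) (h : f a * f b < 0) : ∃ x ∈ Ioo a b, f x = 0 := by
  rcases mul_neg_iff.1 h with ⟨ha, hb⟩ | ⟨ha, hb⟩
  · exact intermediate_value_Ioo' hab hf ⟨hb, ha⟩
  · exact intermediate_value_Ioo hab hf ⟨ha, hb⟩

theorem natDegree_eq_and_eq_C_leadingCoeff_mul_prod_of_isRoot {R : Type*} [CommRing R] [IsDomain R]
    {r : R[X]} (hr : r ≠ 0) {n : ℕ} (hdeg : r.natDegree ≤ n) {ρ : Fin n → R} (hρ : Injective ρ)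
    (hroot : ∀ i, r.IsRoot (ρ i)) :
    r.natDegree = n ∧ r = C r.leadingCoeff * ∏ i, (X - C (ρ i)) := by
  have hle : univ.val.map ρ ≤ r.roots :=
    (Multiset.le_iff_subset (univ.nodup.map hρ)).2 fun x hx => by
      obtain ⟨i, -, rfl⟩ := Multiset.mem_map.1 hx
      exact (mem_roots hr).2 (hroot i)
  have hdvd : ∏ i, (X - C (ρ i)) ∣ r := by
    rw [prod_eq_multiset_prod]
    simpa only [Multiset.map_map, comp_def] using
      (Multiset.prod_X_sub_C_dvd_iff_le_roots hr _).2 hle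
  have hn : r.natDegree = n :=
    le_antisymm hdeg (by simpa using natDegree_le_of_dvd hdvd hr)
  exact ⟨hn, eq_leadingCoeff_mul_of_monic_of_dvd_of_natDegree_le
    (monic_prod_of_monic _ _ fun i _ => monic_X_sub_C _) hdvd (by simp [hn])⟩

theorem exists_strictMono_roots_between {f : ℝ → ℝ} (hf : Continuous f) {k l : ℕ} (hlk : l < k)
    {ν : Fin k → ℝ} (hν : StrictMono ν)
    (hsign : ∀ i : Fin l, f (ν ⟨i, by omega⟩) * f (ν ⟨i + 1, by omega⟩) < 0) :
    ∃ ρ : Fin l → ℝ, StrictMono ρ ∧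
      (∀ i : Fin l, ν ⟨i, by omega⟩ < ρ i ∧ ρ i < ν ⟨i + 1, by omega⟩) ∧ ∀ i, f (ρ i) = 0 := by
  have hroot (i : Fin l) : ∃ x ∈ Ioo (ν ⟨i, by omega⟩) (ν ⟨i + 1, by omega⟩), f x = 0 :=
    exists_mem_Ioo_eq_zero_of_mul_neg (hν.monotone (Fin.mk_le_mk.2 (by omega))) hf.continuousOn
      (hsign i)
  choose ρ hρν hρ0 using hroot
  refine ⟨ρ, fun i j hij => ?_, hρν, hρ0⟩
  calc ρ i < ν ⟨i + 1, by omega⟩ := (hρν i).2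
    _ ≤ ν ⟨j, by omega⟩ := hν.monotone (Fin.mk_le_mk.2 hij)
    _ < ρ j := (hρν j).1

theorem stmt7 (m : ℕ) (hm : 2 ≤ m)
    (μ : Fin m → ℝ) (hμ : StrictMono μ)
    (ν : Fin (m - 1) → ℝ) (hν : StrictMono ν)
    (p q : Polynomial ℝ)
    (hp : p = ∏ i : Fin m, (X - C (μ i)))
    (hq : q = ∏ i : Fin (m - 1), (X - C (ν i)))
    (hinter : ∀ i : Fin (m - 1),
      μ ⟨i, by omega⟩ < ν i ∧ ν i < μ ⟨(i : ℕ) + 1, by omega⟩)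
    (r : Polynomial ℝ) (hr : r = -(p %ₘ q)) :
    r.natDegree = m - 2 ∧ 0 < r.leadingCoeff ∧
    ∃ ρ : Fin (m - 2) → ℝ, StrictMono ρ ∧
      (∀ i : Fin (m - 2),
        ν ⟨i, by omega⟩ < ρ i ∧ ρ i < ν ⟨(i : ℕ) + 1, by omega⟩) ∧
      C r.leadingCoeff⁻¹ * r = ∏ i : Fin (m - 2), (X - C (ρ i)) := by
  have hqm : q.Monic := hq ▸ monic_prod_of_monic _ _ fun i _ => monic_X_sub_C _
  have hsign (i : Fin (m - 1)) : 0 < (-1) ^ (m - i) * r.eval (ν i) := by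
    have hroot : q.IsRoot (ν i) := by simp [hq, eval_prod, prod_eq_zero_iff, sub_eq_zero]
    rw [hr, eval_neg, show (p %ₘ q).eval (ν i) = p.eval (ν i) from
      eval₂_modByMonic_eq_self_of_root hroot, show m - i = m - (i + 1) + 1 by omega, pow_succ, hp]
    simpa using neg_one_pow_mul_eval_prod_X_sub_C_pos_of_mem_Ioo hμ.monotone (by omega) (hinter i)
  have hr0 : r ≠ 0 := by
    rintro rfl
    simpa using hsign ⟨0, by omega⟩
  have hrdeg : r.natDegree ≤ m - 2 := by
    have hqdeg : q.natDegree = m - 1 := by simp [hq]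
    have := natDegree_modByMonic_lt p hqm fun h => by simp [h] at hqdeg; omega
    rw [hr, natDegree_neg]
    omega
  obtain ⟨ρ, hρ, hρν, hρ0⟩ := exists_strictMono_roots_between r.continuous (l := m - 2) (by omega)
    hν fun i => mul_neg_of_neg_one_pow_mul_pos (hsign _) (hsign _) (by dsimp only; omega)
  obtain ⟨hdeg, hfac⟩ :=
    natDegree_eq_and_eq_C_leadingCoeff_mul_prod_of_isRoot hr0 hrdeg hρ.injective hρ0
  have hlc : 0 < r.leadingCoeff := by
    refine pos_of_eval_C_mul_prod_X_sub_C_pos (ρ := ρ) (x := ν ⟨m - 2, by omega⟩) (fun i => ?_) ?_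
    · exact (hρν i).2.trans_le (hν.monotone (Fin.mk_le_mk.2 (by omega)))
    · simpa [← hfac, show m - (m - 2) = 2 by omega] using hsign ⟨m - 2, by omega⟩
  refine ⟨hdeg, hlc, ρ, hρ, hρν, ?_⟩
  nth_rw 2 [hfac]
  rw [← mul_assoc, ← C_mul, inv_mul_cancel₀ hlc.ne', C_1, one_mul]
end

section
/- Let λ_1,...,λ_n be distinct reals and D = diag(λ_1,...,λ_n). Let P be any n×n permutation matrix and D' = P^T D P. Let Q be orthogonal with Q e_1 = e/√n, and let Q' be orthogonal with Q' e_1 = e/√n. Then the matrices A = Q^T D Q and A' = (Q')^T D' Q', after Householder tridiagonalization with transformations fixing e_1, yield unreduced tridiagonal matrices T̂ and T̂' with the same diagonal entries and the same absolute values of off-diagonal entries. -/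
/-!
Write `U = Q H` and `V = P Q' H'`. Then `T̂ = Uᵀ D U` and `T̂' = Vᵀ D V` with `U`, `V` orthogonal,
and both have first column `e / √n`, because `P e = e`. This is the setting of the Implicit Q
Theorem: reading `D U = U T̂` column by column, the Hessenberg shape of `T̂` determines
`T̂ (k+1) k • U.col (k+1)` from the columns `0, …, k`. By induction every column of `V` is a
multiple of the corresponding column of `U`, and unit length forces the factor to be `±1`.
Hence `T̂' i j = ± T̂ i j`, with sign `+` on the diagonal.
-/

open Matrix Finset

namespace Matrix

def IsUpperHessenberg {R : Type*} [Zero R] {n : ℕ} (T : Matrix (Fin n) (Fin n) R) : Prop :=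
  ∀ i j : Fin n, (j : ℕ) + 2 ≤ i → T i j = 0

section CommRing

variable {R : Type*} [CommRing R] {m : Type*} [Fintype m]

theorem transpose_mul_mul_apply (U A : Matrix m m R) (i j : m) :
    (Uᵀ * A * U) i j = U.col i ⬝ᵥ (A *ᵥ U.col j) := by
  rw [Matrix.mul_assoc]
  rfl

theorem col_dotProduct_col_self [DecidableEq m] {U : Matrix m m R} (hU : Uᵀ * U = 1) (k : m) :
    U.col k ⬝ᵥ U.col k = 1 := by
  have h := congrFun (congrFun hU k) k
  rwa [Matrix.mul_apply', one_apply_eq] at h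

theorem transpose_mul_self_mul [DecidableEq m] {U V : Matrix m m R} (hU : Uᵀ * U = 1)
    (hV : Vᵀ * V = 1) : (U * V)ᵀ * (U * V) = 1 := by
  rw [transpose_mul, Matrix.mul_assoc, ← Matrix.mul_assoc Uᵀ, hU, Matrix.one_mul, hV]

theorem mulVec_col_eq_sum [DecidableEq m] {U : Matrix m m R} (hU : Uᵀ * U = 1)
    (A : Matrix m m R) (j : m) :
    A *ᵥ U.col j = ∑ l, (Uᵀ * A * U) l j • U.col l := by
  have hAU : A * U = U * (Uᵀ * A * U) := by
    rw [← Matrix.mul_assoc, ← Matrix.mul_assoc, mul_eq_one_comm.mp hU, Matrix.one_mul]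
  ext i
  rw [show (A *ᵥ U.col j) i = (A * U) i j from rfl, hAU, Matrix.mul_apply]
  simp [Finset.sum_apply, mul_comm]

theorem transpose_mul_mul_apply_of_col_eq_smul {U V : Matrix m m R} (A : Matrix m m R)
    {i j : m} {a b : R} (hi : V.col i = a • U.col i) (hj : V.col j = b • U.col j) :
    (Vᵀ * A * V) i j = a * b * (Uᵀ * A * U) i j := by
  rw [transpose_mul_mul_apply, transpose_mul_mul_apply, hi, hj, mulVec_smul, smul_dotProduct,
    dotProduct_smul, smul_eq_mul, smul_eq_mul, mul_assoc]

end CommRing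

theorem IsUpperHessenberg.sum_eq {R M : Type*} [Semiring R] [AddCommMonoid M] [Module R M]
    {n : ℕ} {T : Matrix (Fin (n + 1)) (Fin (n + 1)) R} (hT : T.IsUpperHessenberg) (i : Fin n)
    (x : Fin (n + 1) → M) :
    ∑ l, T l i.castSucc • x l =
      T i.succ i.castSucc • x i.succ + ∑ l ∈ Iic i.castSucc, T l i.castSucc • x l := by
  have hsucc : i.succ ∉ Iic i.castSucc := by simp
  rw [← sum_insert (f := fun l => T l i.castSucc • x l) hsucc]
  refine (sum_subset (subset_univ _) fun l _ hl => ?_).symm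
  have hl' : (i : ℕ) + 2 ≤ l := by
    simp only [mem_insert, mem_Iic, not_or, Fin.ext_iff, Fin.le_def, Fin.val_succ,
      Fin.val_castSucc] at hl
    omega
  rw [hT l i.castSucc (by simpa using hl'), zero_smul]

theorem IsUpperHessenberg.smul_col_succ {R : Type*} [CommRing R] {n : ℕ}
    {A U : Matrix (Fin (n + 1)) (Fin (n + 1)) R} (hU : Uᵀ * U = 1)
    (hT : (Uᵀ * A * U).IsUpperHessenberg) (i : Fin n) :
    (Uᵀ * A * U) i.succ i.castSucc • U.col i.succ =
      A *ᵥ U.col i.castSucc - ∑ l ∈ Iic i.castSucc, (Uᵀ * A * U) l i.castSucc • U.col l := by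
  rw [mulVec_col_eq_sum hU, hT.sum_eq, add_sub_cancel_right]

section Field

variable {K : Type*} [Field K] {n : ℕ} {A U V : Matrix (Fin (n + 1)) (Fin (n + 1)) K}

theorem exists_sq_eq_one_of_smul_eq_smul {ι : Type*} [Fintype ι] {u v : ι → K} (hu : u ⬝ᵥ u = 1)
    (hv : v ⬝ᵥ v = 1) {a b : K} (ha : a ≠ 0) (h : a • v = b • u) :
    ∃ c : K, c ^ 2 = 1 ∧ v = c • u := by
  have hvu : v = (a⁻¹ * b) • u := by rw [mul_smul, ← h, smul_smul, inv_mul_cancel₀ ha, one_smul]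
  refine ⟨a⁻¹ * b, ?_, hvu⟩
  calc (a⁻¹ * b) ^ 2 = (a⁻¹ * b) ^ 2 * (u ⬝ᵥ u) := by rw [hu, mul_one]
    _ = v ⬝ᵥ v := by rw [hvu, smul_dotProduct, dotProduct_smul, smul_eq_mul, smul_eq_mul,
          ← mul_assoc, sq]
    _ = 1 := hv

theorem exists_col_succ_eq_smul (hU : Uᵀ * U = 1) (hV : Vᵀ * V = 1)
    (hT : (Uᵀ * A * U).IsUpperHessenberg) (hT' : (Vᵀ * A * V).IsUpperHessenberg) (i : Fin n)
    (hunred : (Vᵀ * A * V) i.succ i.castSucc ≠ 0) (s : Fin (n + 1) → K)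
    (hs : ∀ l ≤ i.castSucc, s l ^ 2 = 1 ∧ V.col l = s l • U.col l) :
    ∃ c : K, c ^ 2 = 1 ∧ V.col i.succ = c • U.col i.succ := by
  have hsj := (hs i.castSucc le_rfl).2
  have hcol : (Vᵀ * A * V) i.succ i.castSucc • V.col i.succ =
      (s i.castSucc * (Uᵀ * A * U) i.succ i.castSucc) • U.col i.succ := by
    rw [mul_smul, hT'.smul_col_succ hV, hT.smul_col_succ hU, hsj, mulVec_smul, smul_sub,
      smul_sum]
    congr 1
    refine sum_congr rfl fun l hl => ?_
    obtain ⟨hsl2, hsl⟩ := hs l (mem_Iic.mp hl)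
    rw [transpose_mul_mul_apply_of_col_eq_smul A hsl hsj, hsl, smul_smul, smul_smul]
    congr 1
    linear_combination (s i.castSucc * (Uᵀ * A * U) l i.castSucc) * hsl2
  exact exists_sq_eq_one_of_smul_eq_smul (col_dotProduct_col_self hU _)
    (col_dotProduct_col_self hV _) hunred hcol

/-- The Implicit Q Theorem. -/
theorem exists_col_eq_smul_of_isUpperHessenberg (hU : Uᵀ * U = 1) (hV : Vᵀ * V = 1)
    (h0 : V.col 0 = U.col 0) (hT : (Uᵀ * A * U).IsUpperHessenberg)
    (hT' : (Vᵀ * A * V).IsUpperHessenberg)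
    (hunred : ∀ i : Fin n, (Vᵀ * A * V) i.succ i.castSucc ≠ 0) :
    ∃ s : Fin (n + 1) → K, ∀ k, s k ^ 2 = 1 ∧ V.col k = s k • U.col k := by
  suffices h : ∀ j, ∃ s : Fin (n + 1) → K, ∀ l ≤ j, s l ^ 2 = 1 ∧ V.col l = s l • U.col l by
    obtain ⟨s, hs⟩ := h (Fin.last n)
    exact ⟨s, fun k => hs k (Fin.le_last k)⟩
  intro j
  induction j using Fin.induction with
  | zero =>
    refine ⟨fun _ => 1, fun l hl => ?_⟩
    rw [Fin.le_zero_iff.mp hl]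
    simp [h0]
  | succ i ih =>
    obtain ⟨s, hs⟩ := ih
    obtain ⟨c, hc, hcol⟩ := exists_col_succ_eq_smul hU hV hT hT' i (hunred i) s hs
    refine ⟨Function.update s i.succ c, fun l hl => ?_⟩
    rcases hl.lt_or_eq with hlt | rfl
    · have hne : l ≠ i.succ := hlt.ne
      rw [Function.update_of_ne hne]
      exact hs l (Fin.castSucc_lt_succ_iff.mp hlt)
    · rw [Function.update_self]
      exact ⟨hc, hcol⟩

end Field

theorem abs_transpose_mul_mul_apply_of_isUpperHessenberg {K : Type*} [Field K] [LinearOrder K]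
    [IsStrictOrderedRing K] {n : ℕ} {A U V : Matrix (Fin (n + 1)) (Fin (n + 1)) K}
    (hU : Uᵀ * U = 1) (hV : Vᵀ * V = 1) (h0 : V.col 0 = U.col 0)
    (hT : (Uᵀ * A * U).IsUpperHessenberg) (hT' : (Vᵀ * A * V).IsUpperHessenberg)
    (hunred : ∀ i : Fin n, (Vᵀ * A * V) i.succ i.castSucc ≠ 0) :
    (∀ i, (Vᵀ * A * V) i i = (Uᵀ * A * U) i i) ∧
      ∀ i j, |(Vᵀ * A * V) i j| = |(Uᵀ * A * U) i j| := by
  obtain ⟨s, hs⟩ := exists_col_eq_smul_of_isUpperHessenberg hU hV h0 hT hT' hunred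
  have hentry i j : (Vᵀ * A * V) i j = s i * s j * (Uᵀ * A * U) i j :=
    transpose_mul_mul_apply_of_col_eq_smul A (hs i).2 (hs j).2
  have habs i : |s i| = 1 := by
    rcases sq_eq_one_iff.mp (hs i).1 with h | h <;> simp [h]
  refine ⟨fun i => ?_, fun i j => ?_⟩
  · rw [hentry, ← sq, (hs i).1, one_mul]
  · rw [hentry, abs_mul, abs_mul, habs, habs, one_mul, one_mul]

end Matrix

theorem stmt11_general (n : ℕ)
    (D D' P Q Q' A A' H H' Th Th' : Matrix (Fin (n + 1)) (Fin (n + 1)) ℝ)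
    (hP : ∃ σ : Equiv.Perm (Fin (n + 1)), P = σ.permMatrix ℝ)
    (hD' : D' = Pᵀ * D * P)
    (hQ : Qᵀ * Q = 1)
    (hQe : Q.mulVec (Pi.single 0 1) = fun _ => 1 / Real.sqrt (n + 1))
    (hQ' : Q'ᵀ * Q' = 1)
    (hQ'e : Q'.mulVec (Pi.single 0 1) = fun _ => 1 / Real.sqrt (n + 1))
    (hA : A = Qᵀ * D * Q) (hA' : A' = Q'ᵀ * D' * Q')
    (hH : Hᵀ * H = 1) (hHe : H.mulVec (Pi.single 0 1) = Pi.single 0 1)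
    (hH' : H'ᵀ * H' = 1) (hH'e : H'.mulVec (Pi.single 0 1) = Pi.single 0 1)
    (hT : Th = Hᵀ * A * H) (hT' : Th' = H'ᵀ * A' * H')
    (hTtri : ∀ i j : Fin (n + 1),
      (i : ℕ) + 2 ≤ (j : ℕ) ∨ (j : ℕ) + 2 ≤ (i : ℕ) → Th i j = 0)
    (hT'tri : ∀ i j : Fin (n + 1),
      (i : ℕ) + 2 ≤ (j : ℕ) ∨ (j : ℕ) + 2 ≤ (i : ℕ) → Th' i j = 0)
    (hT'unred : ∀ i j : Fin (n + 1), (i : ℕ) = (j : ℕ) + 1 → Th' i j ≠ 0) :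
    (∀ i, Th i i = Th' i i) ∧
      ∀ i j : Fin (n + 1), (i : ℕ) = (j : ℕ) + 1 → |Th i j| = |Th' i j| := by
  obtain ⟨σ, rfl⟩ := hP
  have hPσ : (σ.permMatrix ℝ)ᵀ * σ.permMatrix ℝ = 1 := by
    rw [transpose_permMatrix, ← permMatrix_mul, mul_inv_cancel, permMatrix_one]
  have hThU : Th = (Q * H)ᵀ * D * (Q * H) := by
    simp only [hT, hA, transpose_mul, Matrix.mul_assoc]
  have hTh'V : Th' = (σ.permMatrix ℝ * (Q' * H'))ᵀ * D * (σ.permMatrix ℝ * (Q' * H')) := by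
    simp only [hT', hA', hD', transpose_mul, Matrix.mul_assoc]
  have h0 : (σ.permMatrix ℝ * (Q' * H')).col 0 = (Q * H).col 0 := by
    rw [← mulVec_single_one, ← mulVec_single_one, ← mulVec_mulVec, ← mulVec_mulVec,
      ← mulVec_mulVec, hHe, hH'e, hQe, hQ'e, permMatrix_mulVec]
    rfl
  rw [hThU] at hTtri ⊢
  rw [hTh'V] at hT'tri hT'unred ⊢
  obtain ⟨hdiag, habs⟩ := abs_transpose_mul_mul_apply_of_isUpperHessenberg
    (transpose_mul_self_mul hQ hH) (transpose_mul_self_mul hPσ (transpose_mul_self_mul hQ' hH'))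
    h0 (fun i j h => hTtri i j (.inr h)) (fun i j h => hT'tri i j (.inr h))
    (fun i => hT'unred i.succ i.castSucc (by simp))
  exact ⟨fun i => (hdiag i).symm, fun i j _ => (habs i j).symm⟩

theorem stmt11 (n : ℕ)
    (lam : Fin (n + 1) → ℝ) (hdist : Function.Injective lam)
    (D D' P Q Q' A A' H H' Th Th' : Matrix (Fin (n + 1)) (Fin (n + 1)) ℝ)
    (hD : D = Matrix.diagonal lam)
    (hP : ∃ σ : Equiv.Perm (Fin (n + 1)), P = σ.permMatrix ℝ)
    (hD' : D' = Pᵀ * D * P)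
    (hQ : Qᵀ * Q = 1)
    (hQe : Q.mulVec (Pi.single 0 1) = fun _ => 1 / Real.sqrt (n + 1))
    (hQ' : Q'ᵀ * Q' = 1)
    (hQ'e : Q'.mulVec (Pi.single 0 1) = fun _ => 1 / Real.sqrt (n + 1))
    (hA : A = Qᵀ * D * Q) (hA' : A' = Q'ᵀ * D' * Q')
    (hH : Hᵀ * H = 1) (hHe : H.mulVec (Pi.single 0 1) = Pi.single 0 1)
    (hH' : H'ᵀ * H' = 1) (hH'e : H'.mulVec (Pi.single 0 1) = Pi.single 0 1)
    (hT : Th = Hᵀ * A * H) (hT' : Th' = H'ᵀ * A' * H')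
    (hTtri : ∀ i j : Fin (n + 1),
      (i : ℕ) + 2 ≤ (j : ℕ) ∨ (j : ℕ) + 2 ≤ (i : ℕ) → Th i j = 0)
    (hT'tri : ∀ i j : Fin (n + 1),
      (i : ℕ) + 2 ≤ (j : ℕ) ∨ (j : ℕ) + 2 ≤ (i : ℕ) → Th' i j = 0)
    (hTunred : ∀ i j : Fin (n + 1), (i : ℕ) = (j : ℕ) + 1 → Th i j ≠ 0)
    (hT'unred : ∀ i j : Fin (n + 1), (i : ℕ) = (j : ℕ) + 1 → Th' i j ≠ 0) :
    (∀ i, Th i i = Th' i i) ∧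
      ∀ i j : Fin (n + 1), (i : ℕ) = (j : ℕ) + 1 → |Th i j| = |Th' i j| :=
  stmt11_general n D D' P Q Q' A A' H H' Th Th' hP hD' hQ hQe hQ' hQ'e hA hA' hH hHe hH' hH'e hT hT'
    hTtri hT'tri hT'unred
end

section
/- Let λ_1 < ... < λ_n be distinct reals (n ≥ 2), let Q be orthogonal with Q e_1 = e/√n, A = Q^T diag(λ_1,...,λ_n) Q, and let H be orthogonal with H e_1 = e_1 and T̂ = H^T A H tridiagonal. Then T̂ is unreduced: all its subdiagonal entries are nonzero. -/
/-!
Write `T̂ = Pᵀ D P` with `P = Q H` orthogonal and `D = diag λ`; the first column of `P` is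
`Q e₁ = e/√n`, so it has no zero entry. If `T̂ (j+1) j = 0`, then by symmetry and tridiagonality
`T̂` is block lower triangular with respect to the split `{0,…,j} ∪ {j+1,…}`, and so are all its
powers. Hence `0 = (T̂ᵐ) 0 (j+1) = ∑ₖ λₖᵐ P k 0 P k (j+1)` for every `m`, and since the `λₖ` are
distinct the Vandermonde matrix forces column `j+1` of `P` to vanish, which is impossible for an
orthogonal matrix.
-/

open Matrix

namespace Matrix

variable {ι K : Type*} [Fintype ι]

theorem IsSymm.transpose_mul_mul [CommSemiring K] {A : Matrix ι ι K} (hA : A.IsSymm)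
    (P : Matrix ι ι K) : (Pᵀ * A * P).IsSymm := by
  rw [IsSymm, transpose_mul, transpose_mul, transpose_transpose, hA.eq, Matrix.mul_assoc]

theorem transpose_mul_diagonal_mul_apply [DecidableEq ι] [CommSemiring K] (P : Matrix ι ι K)
    (d : ι → K) (a b : ι) : (Pᵀ * diagonal d * P) a b = ∑ k, P k a * d k * P k b := by
  simp only [mul_apply (M := Pᵀ * diagonal d), mul_diagonal, transpose_apply]

theorem transpose_mul_diagonal_mul_pow [DecidableEq ι] [CommRing K] {P : Matrix ι ι K}
    (hP : Pᵀ * P = 1) (d : ι → K) (m : ℕ) :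
    (Pᵀ * diagonal d * P) ^ m = Pᵀ * diagonal (d ^ m) * P := by
  let u : (Matrix ι ι K)ˣ := ⟨P, Pᵀ, mul_eq_one_comm.mp hP, hP⟩
  rw [← diagonal_pow]
  exact Units.conj_pow' u (diagonal d) m

theorem exists_pow_transpose_mul_diagonal_mul_apply_ne_zero [Field K] {N : ℕ}
    {P : Matrix (Fin N) (Fin N) K} (hP : Pᵀ * P = 1) {d : Fin N → K} (hd : d.Injective)
    {a : Fin N} (ha : ∀ k, P k a ≠ 0) (b : Fin N) :
    ∃ m, ((Pᵀ * diagonal d * P) ^ m) a b ≠ 0 := by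
  by_contra! h
  have hprod : (fun k => P k a * P k b) = 0 := by
    refine eq_zero_of_forall_pow_sum_mul_pow_eq_zero hd fun m => ?_
    rw [← h m, transpose_mul_diagonal_mul_pow hP, transpose_mul_diagonal_mul_apply]
    exact Finset.sum_congr rfl fun k _ => by simp only [Pi.pow_apply]; ring
  have hcol : ∀ k, P k b = 0 := fun k =>
    (mul_eq_zero.mp (congrFun hprod k)).resolve_left (ha k)
  have hbb := congrFun (congrFun hP b) b
  simp [mul_apply, hcol] at hbb

/-- As `false < true`, this block triangularity says `T k l = 0` whenever `k ≤ j < l`. -/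
theorem blockTriangular_of_superdiagonal_eq_zero {R : Type*} [Zero R] {N : ℕ}
    {T : Matrix (Fin N) (Fin N) R} (hT : ∀ k l : Fin N, (k : ℕ) + 2 ≤ l → T k l = 0)
    {i j : Fin N} (hij : (i : ℕ) = j + 1) (hji : T j i = 0) :
    T.BlockTriangular fun k => decide (k ≤ j) := by
  intro k l hlk
  simp only [Bool.lt_iff, decide_eq_false_iff_not, not_le, decide_eq_true_eq] at hlk
  obtain ⟨hjl, hkj⟩ := hlk
  rcases Nat.lt_or_ge ((k : ℕ) + 1) l with hkl | hkl
  · exact hT k l hkl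
  · obtain rfl : k = j := Fin.ext (by omega)
    obtain rfl : l = i := Fin.ext (by omega)
    exact hji

end Matrix

theorem stmt12_general (n : ℕ)
    (lam : Fin (n + 1) → ℝ) (hmono : StrictMono lam)
    (Q A H Th : Matrix (Fin (n + 1)) (Fin (n + 1)) ℝ)
    (hQ : Qᵀ * Q = 1)
    (hQe : Q.mulVec (Pi.single 0 1) = fun _ => 1 / Real.sqrt (n + 1))
    (hA : A = Qᵀ * Matrix.diagonal lam * Q)
    (hH : Hᵀ * H = 1) (hHe : H.mulVec (Pi.single 0 1) = Pi.single 0 1)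
    (hT : Th = Hᵀ * A * H)
    (hTtri : ∀ i j : Fin (n + 1),
      (i : ℕ) + 2 ≤ (j : ℕ) ∨ (j : ℕ) + 2 ≤ (i : ℕ) → Th i j = 0) :
    ∀ i j : Fin (n + 1), (i : ℕ) = (j : ℕ) + 1 → Th i j ≠ 0 := by
  intro i j hij hTij
  set P := Q * H
  have hPo : Pᵀ * P = 1 := by
    rw [transpose_mul, Matrix.mul_assoc, ← Matrix.mul_assoc Qᵀ, hQ, Matrix.one_mul, hH]
  have hThP : Th = Pᵀ * diagonal lam * P := by
    simp only [hT, hA, P, transpose_mul, Matrix.mul_assoc]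
  have hPcol : ∀ k, P k 0 ≠ 0 := fun k => by
    have hcol : P *ᵥ Pi.single 0 1 = fun _ => 1 / Real.sqrt (n + 1) := by
      rw [← mulVec_mulVec, hHe, hQe]
    rw [mulVec_single_one] at hcol
    rw [← col_apply P, hcol]
    positivity
  have hblock : Th.BlockTriangular fun k => decide (k ≤ j) := by
    refine blockTriangular_of_superdiagonal_eq_zero (fun k l h => hTtri k l (Or.inl h)) hij ?_
    rwa [hThP, (isSymm_diagonal lam).transpose_mul_mul P |>.apply, ← hThP]
  obtain ⟨m, hm⟩ :=
    exists_pow_transpose_mul_diagonal_mul_apply_ne_zero hPo hmono.injective hPcol i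
  refine hm (hThP ▸ hblock.pow m ?_)
  simp [Fin.le_def, hij]

theorem stmt12 (n : ℕ) (hn : 1 ≤ n)
    (lam : Fin (n + 1) → ℝ) (hmono : StrictMono lam)
    (Q A H Th : Matrix (Fin (n + 1)) (Fin (n + 1)) ℝ)
    (hQ : Qᵀ * Q = 1)
    (hQe : Q.mulVec (Pi.single 0 1) = fun _ => 1 / Real.sqrt (n + 1))
    (hA : A = Qᵀ * Matrix.diagonal lam * Q)
    (hH : Hᵀ * H = 1) (hHe : H.mulVec (Pi.single 0 1) = Pi.single 0 1)
    (hT : Th = Hᵀ * A * H)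
    (hTtri : ∀ i j : Fin (n + 1),
      (i : ℕ) + 2 ≤ (j : ℕ) ∨ (j : ℕ) + 2 ≤ (i : ℕ) → Th i j = 0) :
    ∀ i j : Fin (n + 1), (i : ℕ) = (j : ℕ) + 1 → Th i j ≠ 0 :=
  stmt12_general n lam hmono Q A H Th hQ hQe hA hH hHe hT hTtri
end

section
/- Let u(x) = ∏_{i=1}^n (x - λ_i) with λ_1 < ... < λ_n real, and let T be the symmetric tridiagonal matrix produced by Schmeisser's algorithm applied to u (assuming the algorithm is well-defined, i.e., each remainder r_ν has degree exactly n-ν-1 and positive leading coefficient γ_ν). Then the characteristic polynomial of T equals u, so the eigenvalues of T are exactly λ_1,...,λ_n. -/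
open Polynomial

/-- The `n × n` symmetric tridiagonal matrix with diagonal entries `a 1, ..., a n`
(entry `(i,i)` in 1-based indexing is `a i`) and off-diagonal entries
`b 2, ..., b n` (entries `(i, i-1)` and `(i-1, i)` in 1-based indexing equal `b i`). -/
def tridiag (n : ℕ) (a b : ℕ → ℝ) : Matrix (Fin n) (Fin n) ℝ :=
  fun i j =>
    if (i : ℕ) = j then a (i + 1)
    else if (i : ℕ) + 1 = j then b ((j : ℕ) + 1)
    else if (j : ℕ) + 1 = i then b ((i : ℕ) + 1)
    else 0

/-!
The determinant of the trailing principal block of `X - T` on rows and columns `ν, …, n`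
satisfies, by expansion along its first row, the three-term recurrence
`f ν = q ν * f (ν + 1) - γ ν * f (ν + 2)` of Schmeisser's algorithm, with the same initial values
`f (n + 1) = 1` and `f n = q n`; so the whole determinant, the characteristic polynomial of `T`,
is `f 1 = u`. The diagonal entry of `X - T` is `q ν` itself because `q ν * f (ν + 1)` is `f ν`
plus a polynomial of smaller degree, hence monic of degree `deg f ν`, so `q ν` is monic linear.
-/

namespace Polynomial

variable {R : Type*} [CommRing R]

theorem eq_X_add_C_of_eq_mul_sub {p q r s : R[X]} (hp : p.Monic) (hr : r.Monic)
    (hs : s.degree < p.degree) (hdeg : p.natDegree = r.natDegree + 1) (h : p = q * r - s) :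
    q = X + C (q.coeff 0) := by
  have hqr : q * r = p + s := by rw [h]; ring
  have hq : q.Monic := hr.of_mul_monic_right (hqr ▸ hp.add_of_left hs)
  have hdeg' : q.natDegree + r.natDegree = p.natDegree := by
    rw [← hq.natDegree_mul hr, hqr, natDegree_add_eq_left_of_degree_lt hs]
  exact hq.eq_X_add_C (by omega)

end Polynomial

section SymTridiag

variable {R : Type*} [CommRing R]

def symTridiag (n : ℕ) (a b : ℕ → R) : Matrix (Fin n) (Fin n) R :=
  fun i j =>
    if (i : ℕ) = j then a (i + 1)
    else if (i : ℕ) + 1 = j then b ((j : ℕ) + 1)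
    else if (j : ℕ) + 1 = i then b ((i : ℕ) + 1)
    else 0

theorem tridiag_eq_symTridiag (n : ℕ) (a b : ℕ → ℝ) : tridiag n a b = symTridiag n a b := rfl

theorem charmatrix_symTridiag (n : ℕ) (a b : ℕ → R) :
    (symTridiag n a b).charmatrix = symTridiag n (fun k => X - C (a k)) (fun k => -C (b k)) := by
  ext i j
  rcases eq_or_ne i j with rfl | hij
  · simp [symTridiag]
  · have hij' : (i : ℕ) ≠ j := Fin.val_ne_of_ne hij
    rw [Matrix.charmatrix_apply_ne _ _ _ hij]
    simp only [symTridiag, if_neg hij']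
    split_ifs <;> simp

theorem symTridiag_submatrix_succ_succ (n : ℕ) (a b : ℕ → R) :
    (symTridiag (n + 1) a b).submatrix Fin.succ Fin.succ
      = symTridiag n (fun k => a (k + 1)) (fun k => b (k + 1)) := by
  ext i j
  simp only [Matrix.submatrix_apply, symTridiag, Fin.val_succ]
  split_ifs <;> first | rfl | omega

/-- The minor of the `(0, 1)` entry: its first column is `b 2` followed by zeros. -/
theorem det_symTridiag_submatrix_succ_succAbove_one (n : ℕ) (a b : ℕ → R) :
    ((symTridiag (n + 2) a b).submatrix Fin.succ (Fin.succAbove 1)).det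
      = b 2 * (symTridiag n (fun k => a (k + 2)) (fun k => b (k + 2))).det := by
  set M := (symTridiag (n + 2) a b).submatrix Fin.succ (Fin.succAbove 1)
  have hM00 : M 0 0 = b 2 := by simp [M, symTridiag]
  have hM_col : ∀ i : Fin n, M i.succ 0 = 0 := fun i => by
    simp [M, symTridiag, Fin.val_succ]
  have hM_minor : M.submatrix (Fin.succAbove 0) Fin.succ
      = symTridiag n (fun k => a (k + 2)) (fun k => b (k + 2)) := by
    ext i j
    simp only [M, Matrix.submatrix_apply, Fin.succAbove_zero, Fin.one_succAbove_succ,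
      symTridiag, Fin.val_succ]
    split_ifs <;> first | rfl | omega
  rw [Matrix.det_succ_column_zero, Fin.sum_univ_succ, Finset.sum_eq_zero fun i _ => by
    rw [hM_col i, mul_zero, zero_mul], hM00, hM_minor]
  simp

theorem det_symTridiag_add_two (n : ℕ) (a b : ℕ → R) :
    (symTridiag (n + 2) a b).det =
      a 1 * (symTridiag (n + 1) (fun k => a (k + 1)) (fun k => b (k + 1))).det
      - b 2 ^ 2 * (symTridiag n (fun k => a (k + 2)) (fun k => b (k + 2))).det := by
  have hrow : ∀ j : Fin n, symTridiag (n + 2) a b 0 j.succ.succ = 0 := fun j => by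
    simp [symTridiag, Fin.val_succ]
  rw [Matrix.det_succ_row_zero, Fin.sum_univ_succ, Fin.sum_univ_succ,
    Finset.sum_eq_zero fun j _ => by rw [hrow j, mul_zero, zero_mul], Fin.succ_zero_eq_one,
    Fin.succAbove_zero, symTridiag_submatrix_succ_succ,
    det_symTridiag_submatrix_succ_succAbove_one]
  simp [symTridiag]
  ring

theorem det_symTridiag_eq_of_recurrence (n : ℕ) (a b F : ℕ → R)
    (hF_succ : F (n + 1) = 1) (hF : F n = a n)
    (hrec : ∀ ν, 1 ≤ ν → ν + 1 ≤ n → F ν = a ν * F (ν + 1) - b (ν + 1) ^ 2 * F (ν + 2)) :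
    (symTridiag n a b).det = F 1 := by
  induction n using Nat.twoStepInduction generalizing a b F with
  | zero => simpa using hF_succ.symm
  | one => simpa [symTridiag] using hF.symm
  | more n ih₀ ih₁ =>
    rw [det_symTridiag_add_two,
      ih₁ _ _ (fun k => F (k + 1)) hF_succ hF fun ν h1 h2 => hrec (ν + 1) (by omega) (by omega),
      ih₀ _ _ (fun k => F (k + 2)) hF_succ hF fun ν h1 h2 => hrec (ν + 2) (by omega) (by omega),
      hrec 1 le_rfl (by omega)]

end SymTridiag

theorem stmt16_general (n : ℕ)
    (u : Polynomial ℝ)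
    (f q : ℕ → Polynomial ℝ) (γ : ℕ → ℝ)
    (hf1 : f 1 = u)
    (hγ : ∀ ν, 1 ≤ ν → ν ≤ n - 1 → 0 < γ ν)
    (hdiv : ∀ ν, 1 ≤ ν → ν ≤ n - 1 →
      f ν = q ν * f (ν + 1) - C (γ ν) * f (ν + 2))
    (hfm : ∀ ν, 1 ≤ ν → ν ≤ n + 1 → (f ν).Monic ∧ (f ν).natDegree = n + 1 - ν)
    (hqn : q n = f n)
    (T : Matrix (Fin n) (Fin n) ℝ)
    (hT : T = tridiag n (fun ν => -(q ν).eval 0)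
      (fun k => Real.sqrt (γ (k - 1)))) :
    T.charpoly = u := by
  rcases Nat.eq_zero_or_pos n with rfl | hn
  · obtain ⟨hm, hd⟩ := hfm 1 le_rfl le_rfl
    rw [Matrix.charpoly, Matrix.det_isEmpty, ← hf1, hm.natDegree_eq_zero.mp hd]
  have hq_linear : ∀ ν, 1 ≤ ν → ν ≤ n → q ν = X - C (-(q ν).eval 0) := by
    intro ν h1 h2
    rw [map_neg, sub_neg_eq_add, ← coeff_zero_eq_eval_zero]
    rcases h2.lt_or_eq with hlt | rfl
    · obtain ⟨hm₀, hd₀⟩ := hfm ν h1 (by omega)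
      obtain ⟨hm₁, hd₁⟩ := hfm (ν + 1) (by omega) (by omega)
      obtain ⟨-, hd₂⟩ := hfm (ν + 2) (by omega) (by omega)
      refine eq_X_add_C_of_eq_mul_sub hm₀ hm₁ ?_ (by omega) (hdiv ν h1 (by omega))
      rw [degree_C_mul (hγ ν h1 (by omega)).ne']
      exact degree_lt_degree (by omega)
    · obtain ⟨hm, hd⟩ := hfm ν h1 (by omega)
      exact hqn ▸ hm.eq_X_add_C (by omega)
  rw [← hf1, Matrix.charpoly, hT, tridiag_eq_symTridiag, charmatrix_symTridiag]
  apply det_symTridiag_eq_of_recurrence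
  · obtain ⟨hm, hd⟩ := hfm (n + 1) (by omega) le_rfl
    exact hm.natDegree_eq_zero.mp (by omega)
  · rw [← hq_linear n hn le_rfl, hqn]
  · intro ν h1 h2
    rw [← hq_linear ν h1 (by omega), neg_sq, ← C_pow, Nat.add_sub_cancel,
      Real.sq_sqrt (hγ ν h1 (by omega)).le]
    exact hdiv ν h1 (by omega)

/-- Schmeisser's algorithm (its well-defined run): `f 1 = u`, `f 2 = u'/n`, and
for `ν = 1, ..., n-1`, `f ν = q ν * f (ν+1) - γ ν * f (ν+2)` where each `f ν` is
monic of degree `n + 1 - ν`, each `γ ν > 0` (the leading coefficient of the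
remainder `r ν`), and `q n = f n`. The resulting matrix is tridiagonal with
diagonal entries `-(q ν).eval 0` and off-diagonal entries `√(γ ν)`. -/
theorem stmt16 (n : ℕ) (hn : 1 ≤ n)
    (lam : Fin n → ℝ) (hmono : StrictMono lam)
    (u : Polynomial ℝ) (hu : u = ∏ i : Fin n, (X - C (lam i)))
    (f q : ℕ → Polynomial ℝ) (γ : ℕ → ℝ)
    (hf1 : f 1 = u) (hf2 : f 2 = (n : ℝ)⁻¹ • derivative u)
    (hγ : ∀ ν, 1 ≤ ν → ν ≤ n - 1 → 0 < γ ν)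
    (hdiv : ∀ ν, 1 ≤ ν → ν ≤ n - 1 →
      f ν = q ν * f (ν + 1) - C (γ ν) * f (ν + 2))
    (hfm : ∀ ν, 1 ≤ ν → ν ≤ n + 1 → (f ν).Monic ∧ (f ν).natDegree = n + 1 - ν)
    (hqn : q n = f n)
    (T : Matrix (Fin n) (Fin n) ℝ)
    (hT : T = tridiag n (fun ν => -(q ν).eval 0)
      (fun k => Real.sqrt (γ (k - 1)))) :
    T.charpoly = u :=
  stmt16_general n u f q γ hf1 hγ hdiv hfm hqn T hT
end

section
/- Let λ_1 < ... < λ_n be real (n ≥ 2) and let T be the tridiagonal matrix from Schmeisser's algorithm applied to u(x) = ∏(x - λ_i), assumed well-defined with all γ_ν > 0. If W is orthogonal with W^T T W = diag(λ_1,...,λ_n), then every entry of the first row of W has absolute value 1/√n. -/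
open Polynomial Matrix

/-!
Expanding the determinant of a tridiagonal characteristic matrix along its first row gives a
three-term recurrence, which for `T` is the recurrence `f ν = q ν f (ν+1) - γ ν f (ν+2)` of
the algorithm (the off-diagonal entries square to `γ ν`). Hence the characteristic polynomial of
`T` with its first row and column deleted is `f 2 = u' / n`. That polynomial is also the `(0,0)`
entry of `adj (X - T) = W adj (X - D) Wᵀ`, whose value at `λ_j` is `W 0 j ^ 2 * u'(λ_j)`.
As the `λ_i` are distinct, `u'(λ_j) ≠ 0`, so `W 0 j ^ 2 = 1 / n`.
-/

namespace Matrix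

variable {R ι : Type*} [CommRing R] [Fintype ι] [DecidableEq ι]

theorem det_succ_succ_of_tridiagonal_corner {m : ℕ} (M : Matrix (Fin (m + 2)) (Fin (m + 2)) R)
    (hrow : ∀ j : Fin m, M 0 j.succ.succ = 0) (hcol : ∀ i : Fin m, M i.succ.succ 0 = 0) :
    M.det = M 0 0 * (M.submatrix Fin.succ Fin.succ).det -
      M 0 1 * M 1 0 * ((M.submatrix Fin.succ Fin.succ).submatrix Fin.succ Fin.succ).det := by
  have hminor : (M.submatrix Fin.succ (Fin.succAbove 1)).det =
      M 1 0 * ((M.submatrix Fin.succ Fin.succ).submatrix Fin.succ Fin.succ).det := by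
    rw [det_succ_column_zero, Fin.sum_univ_succ]
    simp [hcol, submatrix_submatrix, Function.comp_def]
  rw [det_succ_row_zero, Fin.sum_univ_succ, Fin.sum_univ_succ]
  simp only [hrow, mul_zero, zero_mul, Finset.sum_const_zero, add_zero, Fin.succAbove_zero,
    Fin.succ_zero_eq_one, hminor, Fin.val_zero, Fin.val_one, pow_zero, pow_one]
  ring

theorem submatrix_charmatrix {κ : Type*} [Fintype κ] [DecidableEq κ]
    (M : Matrix ι ι R) {e : κ → ι} (he : Function.Injective e) :
    (charmatrix M).submatrix e e = charmatrix (M.submatrix e e) := by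
  ext i j
  by_cases h : i = j
  · simp [h]
  · simp [charmatrix_apply_ne _ _ _ h, charmatrix_apply_ne _ _ _ (he.ne h)]

theorem adjugate_charmatrix_zero_zero {m : ℕ} (M : Matrix (Fin (m + 1)) (Fin (m + 1)) R) :
    (charmatrix M).adjugate 0 0 = (M.submatrix Fin.succ Fin.succ).charpoly := by
  rw [adjugate_fin_succ_eq_det_submatrix, Fin.succAbove_zero,
    submatrix_charmatrix M (Fin.succ_injective _)]
  simp [charpoly]

theorem adjugate_eq_det_smul_transpose {V : Matrix ι ι R} (hV : Vᵀ * V = 1) :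
    adjugate V = V.det • Vᵀ := by
  calc adjugate V = adjugate V * (V * Vᵀ) := by rw [mul_eq_one_comm.mp hV, Matrix.mul_one]
    _ = V.det • Vᵀ := by rw [← Matrix.mul_assoc, adjugate_mul, smul_mul_assoc, Matrix.one_mul]

theorem adjugate_mul_mul_transpose {V : Matrix ι ι R} (hV : Vᵀ * V = 1) (A : Matrix ι ι R) :
    adjugate (V * A * Vᵀ) = V * adjugate A * Vᵀ := by
  have hdet : V.det * V.det = 1 := by simpa using congrArg det hV
  rw [adjugate_mul_distrib, adjugate_mul_distrib, adjugate_eq_det_smul_transpose hV,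
    adjugate_eq_det_smul_transpose (by rw [transpose_transpose, mul_eq_one_comm.mp hV]),
    det_transpose, transpose_transpose]
  simp only [Matrix.smul_mul, Matrix.mul_smul, smul_smul, hdet, one_smul, Matrix.mul_assoc]

theorem charmatrix_mul_mul_transpose {V : Matrix ι ι R} (hV : Vᵀ * V = 1) (A : Matrix ι ι R) :
    charmatrix (V * A * Vᵀ) = V.map C * charmatrix A * (V.map C)ᵀ := by
  have hV' : V.map C * (V.map C)ᵀ = 1 := by
    rw [← transpose_map, ← Matrix.map_mul, mul_eq_one_comm.mp hV]
    simp
  rw [charmatrix, charmatrix, Matrix.mul_sub, Matrix.sub_mul, map_mul, map_mul,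
    RingHom.mapMatrix_apply, RingHom.mapMatrix_apply, RingHom.mapMatrix_apply, transpose_map,
    ← (scalar_commute (X : R[X]) (Commute.all X) (V.map C)).eq,
    Matrix.mul_assoc (scalar ι (X : R[X])), hV', Matrix.mul_one]

theorem eval_adjugate_charmatrix_apply_self {V T : Matrix ι ι R} {d : ι → R}
    (hV : Vᵀ * V = 1) (hT : Vᵀ * T * V = diagonal d) (i j : ι) :
    (adjugate (charmatrix T) i i).eval (d j) =
      V i j ^ 2 * ∏ k ∈ Finset.univ.erase j, (d j - d k) := by
  have hT' : T = V * diagonal d * Vᵀ := by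
    rw [← hT, ← Matrix.mul_assoc, ← Matrix.mul_assoc, mul_eq_one_comm.mp hV, Matrix.one_mul,
      Matrix.mul_assoc, mul_eq_one_comm.mp hV, Matrix.mul_one]
  have hVC : (V.map C)ᵀ * V.map C = 1 := by
    rw [← transpose_map, ← Matrix.map_mul, hV]
    simp
  rw [hT', charmatrix_mul_mul_transpose hV, adjugate_mul_mul_transpose hVC, charmatrix_diagonal,
    adjugate_diagonal, mul_apply, eval_finsetSum, Finset.sum_eq_single j]
  · simp only [mul_diagonal, map_apply, transpose_apply, eval_mul, eval_C, eval_prod, eval_sub,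
      eval_X]
    ring
  · intro k _ hkj
    have hj : j ∈ Finset.univ.erase k := Finset.mem_erase.mpr ⟨Ne.symm hkj, Finset.mem_univ j⟩
    simp [eval_prod, Finset.prod_eq_zero hj]
  · simp

end Matrix

theorem Polynomial.Monic.of_eq_mul_sub_C_mul {R : Type*} [CommRing R]
    {f g h q : R[X]} {c : R} (hf : f.Monic) (hg : g.Monic) (hdeg : h.natDegree < f.natDegree)
    (heq : f = q * g - C c * h) : q.Monic ∧ q.natDegree + g.natDegree = f.natDegree := by
  have hlt : (C c * h).degree < f.degree := by
    rw [C_mul']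
    exact (degree_smul_le c h).trans_lt (degree_lt_degree hdeg)
  have hqg : q * g = f + C c * h := by rw [heq]; ring
  have hmonic : (q * g).Monic := hqg ▸ hf.add_of_left hlt
  have hq : q.Monic := hg.of_mul_monic_right hmonic
  refine ⟨hq, ?_⟩
  rw [← hq.natDegree_mul hg, hqg, natDegree_add_eq_left_of_degree_lt hlt]

theorem tridiag_submatrix_succ (m : ℕ) (a b : ℕ → ℝ) :
    (tridiag (m + 1) a b).submatrix Fin.succ Fin.succ =
      tridiag m (fun ν => a (ν + 1)) (fun k => b (k + 1)) := by
  ext i j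
  simp [tridiag]

theorem charpoly_tridiag_add_two (m : ℕ) (a b : ℕ → ℝ) :
    (tridiag (m + 2) a b).charpoly =
      (X - C (a 1)) * (tridiag (m + 1) (fun ν => a (ν + 1)) (fun k => b (k + 1))).charpoly -
        C (b 2 ^ 2) * (tridiag m (fun ν => a (ν + 2)) (fun k => b (k + 2))).charpoly := by
  rw [charpoly, det_succ_succ_of_tridiagonal_corner]
  · rw [submatrix_charmatrix _ (Fin.succ_injective _), tridiag_submatrix_succ,
      submatrix_charmatrix _ (Fin.succ_injective _), tridiag_submatrix_succ,
      charmatrix_apply_eq, charmatrix_apply_ne _ _ _ Fin.zero_ne_one,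
      charmatrix_apply_ne _ _ _ Fin.zero_ne_one.symm]
    simp [tridiag, charpoly, sq]
  · intro j
    rw [charmatrix_apply_ne _ _ _ (Fin.succ_ne_zero _).symm]
    simp [tridiag]
  · intro i
    rw [charmatrix_apply_ne _ _ _ (Fin.succ_ne_zero _)]
    simp [tridiag]

theorem charpoly_tridiag_of_recurrence (n : ℕ) (a b : ℕ → ℝ) (f : ℕ → ℝ[X])
    (hlast : f (n + 1) = 1) (hfirst : f n = X - C (a n))
    (hrec : ∀ ν, 1 ≤ ν → ν + 1 ≤ n →
      f ν = (X - C (a ν)) * f (ν + 1) - C (b (ν + 1) ^ 2) * f (ν + 2)) :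
    (tridiag n a b).charpoly = f 1 := by
  induction n using Nat.twoStepInduction generalizing a b f with
  | zero => rw [charpoly_isEmpty, ← hlast]
  | one => simp [hfirst, charpoly, tridiag]
  | more n ih ih' =>
    rw [charpoly_tridiag_add_two, hrec 1 le_rfl (by omega),
      ih' (fun ν => a (ν + 1)) (fun k => b (k + 1)) (fun ν => f (ν + 1)) hlast hfirst
        (fun ν _ _ => hrec (ν + 1) (by omega) (by omega)),
      ih (fun ν => a (ν + 2)) (fun k => b (k + 2)) (fun ν => f (ν + 2)) hlast hfirst
        (fun ν _ _ => hrec (ν + 2) (by omega) (by omega))]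

section Schmeisser

variable {n : ℕ} {f q : ℕ → ℝ[X]} {γ : ℕ → ℝ}

theorem schmeisser_quotient_eq_X_sub_C
    (hdiv : ∀ ν, 1 ≤ ν → ν ≤ n - 1 → f ν = q ν * f (ν + 1) - C (γ ν) * f (ν + 2))
    (hfm : ∀ ν, 1 ≤ ν → ν ≤ n + 1 → (f ν).Monic ∧ (f ν).natDegree = n + 1 - ν)
    (hqn : q n = f n) {ν : ℕ} (h1 : 1 ≤ ν) (h2 : ν ≤ n) :
    q ν = X - C (-(q ν).eval 0) := by
  obtain ⟨hmonic, hdeg⟩ : (q ν).Monic ∧ (q ν).natDegree = 1 := by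
    rcases h2.lt_or_eq with h2 | rfl
    · obtain ⟨hf, hdf⟩ := hfm ν h1 (by omega)
      obtain ⟨hf₁, hdf₁⟩ := hfm (ν + 1) (by omega) (by omega)
      have hdf₂ := (hfm (ν + 2) (by omega) (by omega)).2
      obtain ⟨hq, hdq⟩ := hf.of_eq_mul_sub_C_mul hf₁ (by omega) (hdiv ν h1 (by omega))
      exact ⟨hq, by omega⟩
    · obtain ⟨hf, hdf⟩ := hfm ν h1 (by omega)
      exact hqn ▸ ⟨hf, by omega⟩
  rw [map_neg, sub_neg_eq_add, ← coeff_zero_eq_eval_zero]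
  exact hmonic.eq_X_add_C hdeg

theorem adjugate_charmatrix_schmeisser (hn : 0 < n)
    (hγ : ∀ ν, 1 ≤ ν → ν ≤ n - 1 → 0 < γ ν)
    (hdiv : ∀ ν, 1 ≤ ν → ν ≤ n - 1 → f ν = q ν * f (ν + 1) - C (γ ν) * f (ν + 2))
    (hfm : ∀ ν, 1 ≤ ν → ν ≤ n + 1 → (f ν).Monic ∧ (f ν).natDegree = n + 1 - ν)
    (hqn : q n = f n) :
    (charmatrix (tridiag n (fun ν => -(q ν).eval 0) (fun k => √(γ (k - 1))))).adjugate
      ⟨0, hn⟩ ⟨0, hn⟩ = f 2 := by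
  obtain ⟨m, rfl⟩ : ∃ m, n = m + 1 := ⟨n - 1, by omega⟩
  rw [show (⟨0, hn⟩ : Fin (m + 1)) = 0 from rfl, adjugate_charmatrix_zero_zero,
    tridiag_submatrix_succ]
  refine charpoly_tridiag_of_recurrence m _ _ (fun ν => f (ν + 1)) ?_ ?_ ?_
  · obtain ⟨hf, hdf⟩ := hfm (m + 2) (by omega) le_rfl
    exact hf.natDegree_eq_zero.mp (by omega)
  · exact hqn ▸ schmeisser_quotient_eq_X_sub_C hdiv hfm hqn (by omega) le_rfl
  · intro ν h1 h2
    rw [hdiv (ν + 1) (by omega) (by omega),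
      ← schmeisser_quotient_eq_X_sub_C hdiv hfm hqn (by omega) (by omega),
      show ν + 1 + 1 - 1 = ν + 1 by omega, Real.sq_sqrt (hγ (ν + 1) (by omega) (by omega)).le]

end Schmeisser

/-- Schmeisser's algorithm (its well-defined run): `f 1 = u`, `f 2 = u'/n`, and
for `ν = 1, ..., n-1`, `f ν = q ν * f (ν+1) - γ ν * f (ν+2)` where each `f ν` is
monic of degree `n + 1 - ν`, each `γ ν > 0` (the leading coefficient of the
remainder `r ν`), and `q n = f n`. The resulting matrix is tridiagonal with
diagonal entries `-(q ν).eval 0` and off-diagonal entries `√(γ ν)`. -/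
theorem stmt17 (n : ℕ) (hn : 2 ≤ n)
    (lam : Fin n → ℝ) (hmono : StrictMono lam)
    (u : Polynomial ℝ) (hu : u = ∏ i : Fin n, (X - C (lam i)))
    (f q : ℕ → Polynomial ℝ) (γ : ℕ → ℝ)
    (hf2 : f 2 = (n : ℝ)⁻¹ • derivative u)
    (hγ : ∀ ν, 1 ≤ ν → ν ≤ n - 1 → 0 < γ ν)
    (hdiv : ∀ ν, 1 ≤ ν → ν ≤ n - 1 →
      f ν = q ν * f (ν + 1) - C (γ ν) * f (ν + 2))
    (hfm : ∀ ν, 1 ≤ ν → ν ≤ n + 1 → (f ν).Monic ∧ (f ν).natDegree = n + 1 - ν)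
    (hqn : q n = f n)
    (T : Matrix (Fin n) (Fin n) ℝ)
    (hT : T = tridiag n (fun ν => -(q ν).eval 0)
      (fun k => Real.sqrt (γ (k - 1)))) :
    ∀ (W : Matrix (Fin n) (Fin n) ℝ), Wᵀ * W = 1 →
      Wᵀ * T * W = Matrix.diagonal lam →
      ∀ j, |W ⟨0, by omega⟩ j| = 1 / Real.sqrt n := by
  intro W hW hWT j
  have heval := eval_adjugate_charmatrix_apply_self hW hWT ⟨0, by omega⟩ j
  have hnodal : u = Lagrange.nodal Finset.univ lam := hu
  rw [hT, adjugate_charmatrix_schmeisser _ hγ hdiv hfm hqn, hf2, eval_smul, hnodal,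
    Lagrange.eval_nodal_derivative_eval_node_eq (Finset.mem_univ j), Lagrange.eval_nodal,
    smul_eq_mul] at heval
  have hprod : ∏ k ∈ Finset.univ.erase j, (lam j - lam k) ≠ 0 :=
    Finset.prod_ne_zero_iff.mpr fun k hk =>
      sub_ne_zero.mpr (hmono.injective.ne (Finset.ne_of_mem_erase hk).symm)
  have hsq : W ⟨0, by omega⟩ j ^ 2 = (n : ℝ)⁻¹ := (mul_right_cancel₀ hprod heval).symm
  rw [← Real.sqrt_sq_eq_abs, hsq, Real.sqrt_inv, one_div]
end

section
/- Let A be an n×n Hermitian matrix with simple eigenvalue λ and unit eigenvector v. Then p_A'(λ) ≠ 0, and |v_1|^2 = p_{M_1}(λ)/p_A'(λ), where M_1 = A(2:n,2:n). -/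
/-!
Diagonalize `A = U D U*` with `U` unitary. Then `adj (μ - A) = U adj (μ - D) U*`, and since `μ`
occurs exactly once on the diagonal of `D`, say at `i`, the only nonzero entry of `adj (μ - D)` is
`∏_{j ≠ i} (μ - λ_j) = p_A'(μ)` at `(i, i)`; moreover `U* v` is a unit multiple of the `i`-th basis
vector. Hence `adj (μ - A) = p_A'(μ) v v*`, and the `(0, 0)` entry of the adjugate is the minor
`det (μ - M_1) = p_{M_1}(μ)`.
-/

open Polynomial Matrix Finset

theorem Polynomial.eval_derivative_ne_zero_of_rootMultiplicity_eq_one {R : Type*} [CommRing R]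
    {p : R[X]} {t : R} (h : p.rootMultiplicity t = 1) : (derivative p).eval t ≠ 0 := by
  have hp : p ≠ 0 := by rintro rfl; simp at h
  have hroot : p.IsRoot t := (rootMultiplicity_pos hp).1 (by omega)
  exact fun h' ↦ (lt_irrefl 1) (h ▸ (one_lt_rootMultiplicity_iff_isRoot hp).2 ⟨hroot, h'⟩)

namespace Matrix

variable {R : Type*} [CommRing R]

theorem eval_charpoly_submatrix_succ {n : ℕ}
    (A : Matrix (Fin (n + 1)) (Fin (n + 1)) R) (t : R) :
    (A.submatrix Fin.succ Fin.succ).charpoly.eval t = adjugate (scalar _ t - A) 0 0 := by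
  have : (scalar _ t - A).submatrix Fin.succ Fin.succ =
      scalar _ t - A.submatrix Fin.succ Fin.succ := by
    ext i j
    simp [scalar_apply, diagonal_apply]
  rw [eval_charpoly, adjugate_fin_succ_eq_det_submatrix, Fin.succAbove_zero, this]
  simp

variable {n : Type*}

theorem vecMulVec_single_star_single [StarRing R] [DecidableEq n] (i : n) (t : R) :
    vecMulVec (Pi.single i t) (star (Pi.single i t)) = diagonal (Pi.single i (t * star t)) := by
  ext a b
  obtain rfl | hab := eq_or_ne a b
  · obtain rfl | ha := eq_or_ne a i <;> simp [vecMulVec_apply, *]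
  · rw [diagonal_apply_ne _ hab, vecMulVec_apply]
    obtain rfl | ha := eq_or_ne a i
    · simp [Pi.single_eq_of_ne hab.symm]
    · simp [Pi.single_eq_of_ne ha]

variable [Fintype n]

theorem vecMulVec_mulVec_star_mulVec [StarRing R] (U : Matrix n n R) (y : n → R) :
    vecMulVec (U *ᵥ y) (star (U *ᵥ y)) = U * vecMulVec y (star y) * star U := by
  rw [mul_vecMulVec, vecMulVec_mul, star_mulVec]
  rfl

variable [DecidableEq n]

theorem star_mulVec_dotProduct_mulVec_of_mem_unitary [StarRing R] {U : Matrix n n R}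
    (hU : U ∈ unitary (Matrix n n R)) (x y : n → R) :
    star (U *ᵥ x) ⬝ᵥ (U *ᵥ y) = star x ⬝ᵥ y := by
  rw [star_mulVec, dotProduct_mulVec, vecMul_vecMul, ← star_eq_conjTranspose,
    Unitary.star_mul_self_of_mem hU, vecMul_one]

theorem adjugate_diagonal_of_eq_zero {d : n → R} {i : n} (hi : d i = 0) :
    adjugate (diagonal d) = diagonal (Pi.single i (∏ j ∈ univ.erase i, d j)) := by
  rw [adjugate_diagonal]
  congr 1
  funext k
  obtain rfl | hk := eq_or_ne k i
  · simp
  · rw [Pi.single_eq_of_ne hk]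
    exact prod_eq_zero (mem_erase.2 ⟨hk.symm, mem_univ i⟩) hi

theorem adjugate_eq_det_smul_star_of_mem_unitary [StarRing R] {U : Matrix n n R}
    (hU : U ∈ unitary (Matrix n n R)) : adjugate U = det U • star U :=
  calc adjugate U = adjugate U * (U * star U) := by rw [Unitary.mul_star_self_of_mem hU, mul_one]
    _ = det U • star U := by rw [← mul_assoc, adjugate_mul, smul_mul_assoc, one_mul]

theorem adjugate_unitary_conj [StarRing R] {U : Matrix n n R} (hU : U ∈ unitary (Matrix n n R))
    (M : Matrix n n R) : adjugate (U * M * star U) = U * adjugate M * star U := by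
  have hdet : det U * det (star U) = 1 := by
    rw [← det_mul, Unitary.mul_star_self_of_mem hU, det_one]
  rw [adjugate_mul_distrib, adjugate_mul_distrib, adjugate_eq_det_smul_star_of_mem_unitary hU,
    adjugate_eq_det_smul_star_of_mem_unitary (Unitary.star_mem hU)]
  simp only [star_star, smul_mul_assoc, mul_smul_comm, smul_smul, hdet, one_smul, mul_assoc]

namespace IsHermitian

variable {𝕜 : Type*} [RCLike 𝕜] {A : Matrix n n 𝕜}

theorem existsUnique_eigenvalues_eq_of_rootMultiplicity_eq_one (hA : A.IsHermitian) {μ : ℝ}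
    (hμ : A.charpoly.rootMultiplicity (μ : 𝕜) = 1) : ∃! i, hA.eigenvalues i = μ := by
  rw [← count_roots, hA.roots_charpoly_eq_eigenvalues, Multiset.count_map,
    ← Finset.filter_val, ← Finset.card_def, card_eq_one_iff_existsUnique] at hμ
  simpa [eq_comm] using hμ

theorem eval_derivative_charpoly_eigenvalues (hA : A.IsHermitian) (i : n) :
    (derivative A.charpoly).eval (hA.eigenvalues i : 𝕜) =
      ∏ j ∈ univ.erase i, ((hA.eigenvalues i : 𝕜) - hA.eigenvalues j) := by
  have := Lagrange.eval_nodal_derivative_eval_node_eq (v := fun j ↦ (hA.eigenvalues j : 𝕜))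
    (mem_univ i)
  rwa [Lagrange.nodal, ← hA.charpoly_eq, Lagrange.eval_nodal] at this

theorem eigenvectorUnitary_mul_diagonal_mul_star (hA : A.IsHermitian) :
    (hA.eigenvectorUnitary : Matrix n n 𝕜) * diagonal (fun j ↦ (hA.eigenvalues j : 𝕜)) *
      star (hA.eigenvectorUnitary : Matrix n n 𝕜) = A :=
  hA.spectral_theorem.symm

theorem star_eigenvectorUnitary_mulVec_eq_single (hA : A.IsHermitian) {μ : ℝ} {i : n}
    (hi : ∀ j, hA.eigenvalues j = μ → j = i) {v : n → 𝕜} (hv : A *ᵥ v = (μ : 𝕜) • v) :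
    star (hA.eigenvectorUnitary : Matrix n n 𝕜) *ᵥ v =
      Pi.single i ((star (hA.eigenvectorUnitary : Matrix n n 𝕜) *ᵥ v) i) := by
  set U : Matrix n n 𝕜 := ↑hA.eigenvectorUnitary
  set y := star U *ᵥ v
  have hdiag : diagonal (fun j ↦ (hA.eigenvalues j : 𝕜)) *ᵥ y = (μ : 𝕜) • y := by
    have hconj : star U * A = diagonal (fun j ↦ (hA.eigenvalues j : 𝕜)) * star U := by
      conv_lhs => rw [← hA.eigenvectorUnitary_mul_diagonal_mul_star]
      rw [← mul_assoc, ← mul_assoc, Unitary.coe_star_mul_self, one_mul]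
    rw [mulVec_mulVec, ← hconj, ← mulVec_mulVec, hv, mulVec_smul]
  funext j
  obtain rfl | hj := eq_or_ne j i
  · simp
  · rw [Pi.single_eq_of_ne hj]
    have hne : (hA.eigenvalues j : 𝕜) ≠ μ := by exact_mod_cast fun h ↦ hj (hi j h)
    have hj' := congrFun hdiag j
    rw [mulVec_diagonal, Pi.smul_apply, smul_eq_mul] at hj'
    exact (mul_eq_mul_right_iff.1 hj').resolve_left hne

theorem adjugate_scalar_sub_eq_smul_vecMulVec (hA : A.IsHermitian) {μ : ℝ}
    (hμ : A.charpoly.rootMultiplicity (μ : 𝕜) = 1) {v : n → 𝕜} (hv : A *ᵥ v = (μ : 𝕜) • v)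
    (hunit : star v ⬝ᵥ v = 1) :
    Matrix.adjugate (scalar n (μ : 𝕜) - A) =
      (derivative A.charpoly).eval (μ : 𝕜) • vecMulVec v (star v) := by
  obtain ⟨i, rfl, hi⟩ := hA.existsUnique_eigenvalues_eq_of_rootMultiplicity_eq_one hμ
  set U : Matrix n n 𝕜 := ↑hA.eigenvectorUnitary
  have hU : U ∈ unitary (Matrix n n 𝕜) := hA.eigenvectorUnitary.2
  set d : n → 𝕜 := fun j ↦ (hA.eigenvalues j : 𝕜)
  set t := (star U *ᵥ v) i
  have hy := hA.star_eigenvectorUnitary_mulVec_eq_single hi hv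
  have hvU : v = U *ᵥ Pi.single i t := by
    rw [← hy, mulVec_mulVec, Unitary.mul_star_self_of_mem hU, one_mulVec]
  have ht : t * star t = 1 := by
    rw [hvU, star_mulVec_dotProduct_mulVec_of_mem_unitary hU] at hunit
    simpa [mul_comm] using hunit
  have hB : scalar n (d i) - A = U * diagonal (fun j ↦ d i - d j) * star U := by
    rw [← diagonal_sub, ← scalar_apply, mul_sub, sub_mul,
      hA.eigenvectorUnitary_mul_diagonal_mul_star,
      ← (scalar_commute _ (Commute.all _) U).eq, mul_assoc, Unitary.mul_star_self_of_mem hU,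
      mul_one]
  rw [hB, adjugate_unitary_conj hU,
    adjugate_diagonal_of_eq_zero (d := fun j ↦ d i - d j) (sub_self _),
    hA.eval_derivative_charpoly_eigenvalues, hvU, vecMulVec_mulVec_star_mulVec,
    vecMulVec_single_star_single, ht, ← smul_mul_assoc, ← mul_smul_comm, ← diagonal_smul,
    ← Pi.single_smul, smul_eq_mul, mul_one]

end IsHermitian

end Matrix

theorem stmt18 (n : ℕ) (A : Matrix (Fin (n + 1)) (Fin (n + 1)) ℂ)
    (hA : A.IsHermitian) (μ : ℝ)
    (hsimple : A.charpoly.rootMultiplicity (μ : ℂ) = 1)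
    (v : Fin (n + 1) → ℂ)
    (heig : A.mulVec v = (μ : ℂ) • v)
    (hunit : star v ⬝ᵥ v = 1) :
    (derivative A.charpoly).eval (μ : ℂ) ≠ 0 ∧
    (‖v 0‖ ^ 2 : ℂ) =
      ((A.submatrix Fin.succ Fin.succ).charpoly).eval (μ : ℂ) /
        (derivative A.charpoly).eval (μ : ℂ) := by
  have hderiv := eval_derivative_ne_zero_of_rootMultiplicity_eq_one hsimple
  refine ⟨hderiv, ?_⟩
  have hadj :=
    congrFun (congrFun (hA.adjugate_scalar_sub_eq_smul_vecMulVec hsimple heig hunit) 0) 0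
  rw [eq_div_iff hderiv, eval_charpoly_submatrix_succ]
  refine (hadj.trans ?_).symm
  simp [vecMulVec_apply, Complex.mul_conj', mul_comm]
end
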